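/- arXiv:2109.15268 — 5 statements merged into one kernel-verified Lean document; each statement's English description precedes it below -/
import Mathlib

section
/- Let P be a shortest uv-trail of a uv-straight graph G and let (s,t) be the twist pair of P. Then every vertex x of the subpath P[s,t] satisfies h(t) ≤ h(x) ≤ h(s). -/
open SimpleGraph

variable {V : Type*}

/-- A walk is monotone if its vertices have pairwise distinct heights. -/
def MonoWalk (G : SimpleGraph V) (u : V) {x y : V} (W : G.Walk x y) : Prop :=
  (W.support.map (fun z => G.dist u z)).Nodup

/-- `P` is a shortest `x`-`y` path of `G`. -/
def IsShortestPath (G : SimpleGraph V) {x y : V} (P : G.Walk x y) : Prop :=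
  P.IsPath ∧ P.length = G.dist x y

/-- `P` is an induced path of `G`: a path that equals the subgraph of `G`
induced by its vertex set. -/
def IsInducedPath (G : SimpleGraph V) {x y : V} (P : G.Walk x y) : Prop :=
  P.IsPath ∧ ∀ a b : V, a ∈ P.support → b ∈ P.support → G.Adj a b → P.toSubgraph.Adj a b

/-- A `uv`-trail of `G`: an induced `uv`-path of `G` that is not a shortest
`uv`-path of `G`. -/
def IsTrailPath (G : SimpleGraph V) (u v : V) (P : G.Walk u v) : Prop :=
  IsInducedPath G P ∧ ¬ IsShortestPath G P

/-- A shortest `uv`-trail of `G`: a `uv`-trail of minimum number of edges. -/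
def IsShortestTrail (G : SimpleGraph V) (u v : V) (P : G.Walk u v) : Prop :=
  IsTrailPath G u v P ∧ ∀ Q : G.Walk u v, IsTrailPath G u v Q → P.length ≤ Q.length

/-- `G` is `uv`-straight: every vertex lies on a shortest `uv`-path of `G`. -/
def Straight (G : SimpleGraph V) (u v : V) : Prop :=
  ∀ x : V, ∃ P : G.Walk u v, IsShortestPath G P ∧ x ∈ P.support

/-- Vertex sets `X` and `Y` are anticomplete in `G`: they are disjoint and there
is no edge of `G` between them. -/
def Anticomplete (G : SimpleGraph V) (X Y : Set V) : Prop :=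
  ∀ x ∈ X, ∀ y ∈ Y, x ≠ y ∧ ¬ G.Adj x y

/-- `x` and `y` are connected in the subgraph of `G` induced by `A`. -/
def ConnIn (G : SimpleGraph V) (A : Set V) (x y : V) : Prop :=
  ∃ W : G.Walk x y, ∀ z ∈ W.support, z ∈ A

/-- The closed neighborhood `N_G[A]` of a vertex set `A`. -/
def closedNbhd (G : SimpleGraph V) (A : Set V) : Set V :=
  {y | y ∈ A ∨ ∃ x ∈ A, G.Adj x y}

/-- `(s, t)` is the twist pair of the `uv`-path `P`: `P[u,s]` is the maximal
monotone prefix of `P` and `P[t,v]` is the maximal monotone suffix of `P`. -/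
def IsTwistPair [DecidableEq V] (G : SimpleGraph V) (u v : V) (P : G.Walk u v)
    (s t : V) : Prop :=
  ∃ (hs : s ∈ P.support) (ht : t ∈ P.support),
    MonoWalk G u (P.takeUntil s hs) ∧ MonoWalk G u (P.dropUntil t ht) ∧
    (∀ (s' : V) (hs' : s' ∈ P.support), MonoWalk G u (P.takeUntil s' hs') →
      (P.takeUntil s' hs').length ≤ (P.takeUntil s hs).length) ∧
    (∀ (t' : V) (ht' : t' ∈ P.support), MonoWalk G u (P.dropUntil t' ht') →
      (P.dropUntil t' ht').length ≤ (P.dropUntil t ht).length)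

/-- `(W1, W2)` is a pair of wings for the quadruple `(a, b, c, d)` in `G`
(with respect to heights measured from `u`): `W1` is a monotone `c`-`a*`-path
containing `a`, `W2` is a monotone `b`-`d*`-path containing `d`,
`h(a*) + 1 = h(a) = h(b) ≤ h(c) = h(d) = h(d*) - 1`, `W1 - c` is anticomplete
to `W2`, and `W1` is anticomplete to `W2 - b`. -/
def IsWingPair (G : SimpleGraph V) (u : V) (a b c d : V) {astar dstar : V}
    (W1 : G.Walk c astar) (W2 : G.Walk b dstar) : Prop :=
  W1.IsPath ∧ W2.IsPath ∧ MonoWalk G u W1 ∧ MonoWalk G u W2 ∧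
  a ∈ W1.support ∧ d ∈ W2.support ∧
  G.dist u astar + 1 = G.dist u a ∧ G.dist u a = G.dist u b ∧
  G.dist u b ≤ G.dist u c ∧ G.dist u c = G.dist u d ∧
  G.dist u d + 1 = G.dist u dstar ∧
  Anticomplete G {x | x ∈ W1.support ∧ x ≠ c} {x | x ∈ W2.support} ∧
  Anticomplete G {x | x ∈ W1.support} {x | x ∈ W2.support ∧ x ≠ b}

/-- The quadruple `(a, b, c, d)` is winged in `G`. -/
def Winged (G : SimpleGraph V) (u : V) (a b c d : V) : Prop :=
  ∃ (astar dstar : V) (W1 : G.Walk c astar) (W2 : G.Walk b dstar),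
    IsWingPair G u a b c d W1 W2

/-- The quadruple `(a, b, c, d)` admits a pair of wings `(W1, W2)` in `G` with
`W1` anticomplete to `W2`. -/
def WingedAnti (G : SimpleGraph V) (u : V) (a b c d : V) : Prop :=
  ∃ (astar dstar : V) (W1 : G.Walk c astar) (W2 : G.Walk b dstar),
    IsWingPair G u a b c d W1 W2 ∧
    Anticomplete G {x | x ∈ W1.support} {x | x ∈ W2.support}

/-- For a `uv`-trail `P` of a `uv`-straight graph `G` with twist pair `(s, t)`,
a monotone `uc`-path `S` of `G` with `h(c) = h(s)` is a sidetrack for `P` if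
(S1) `G` contains a monotone `tv`-path `T` with `S - c` anticomplete to `T` and
`S` anticomplete to `T - t`, and (S2) `S` contains the vertex `a` of `P[u,s]`
with `h(a) = h(t)`. -/
def IsSidetrack [DecidableEq V] (G : SimpleGraph V) (u v : V) (P : G.Walk u v)
    (s t : V) {c : V} (S : G.Walk u c) : Prop :=
  S.IsPath ∧ MonoWalk G u S ∧ G.dist u c = G.dist u s ∧
  (∃ (T : G.Walk t v), T.IsPath ∧ MonoWalk G u T ∧
    Anticomplete G {x | x ∈ S.support ∧ x ≠ c} {x | x ∈ T.support} ∧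
    Anticomplete G {x | x ∈ S.support} {x | x ∈ T.support ∧ x ≠ t}) ∧
  (∀ (hs : s ∈ P.support) (a : V),
    a ∈ (P.takeUntil s hs).support → G.dist u a = G.dist u t → a ∈ S.support)

/-!
Heights change by at most one along a walk, so a prefix of a walk from `u` with distinct
heights has heights `0, 1, 2, …`; in a `uv`-straight graph `h(x) + d(x, v) = d(u, v)`, so
likewise a suffix ending at `v` with distinct heights climbs by one at every step.

Upper bound. Let `x = P_j` lie before `t` with `h(x) > h(s)`. As `P[x,v]` is not monotone, it
is longer than `d(x, v)`, so `P[u,x]` followed by `Q[x,v]`, for a shortest `uv`-path `Q`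
through `x`, is shorter than `P`; an induced `uv`-path `R` inside it is then shorter than `P`,
hence a shortest path by the minimality of `P`. Because `P` is induced, `R` runs along `P`
as long as it stays in `P[u,x]`; this common prefix is monotone, so it ends at height at most
`h(s)`, and the next vertex of `R` is a vertex of `Q[x,v]` of height at most `h(s) + 1 ≤ h(x)`,
that is `x` itself, which lies on `P[u,x]`. For `x = t`, if `t` were higher than its
predecessor `t'`, then `P[t',v]` would be a longer monotone suffix.

The lower bound is the upper bound for the reversed trail, whose heights are `d(u, v) - h`.
-/

namespace SimpleGraph.Walk

variable {G : SimpleGraph V} {a b o w : V}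

lemma dist_getVert_le_dist_getVert_add (W : G.Walk a b) (o : V) (i j : ℕ) :
    G.dist o (W.getVert i) ≤ G.dist o (W.getVert j) + (i - j + (j - i)) := by
  have step (k : ℕ) : G.dist o (W.getVert (k + 1)) ≤ G.dist o (W.getVert k) + 1 ∧
      G.dist o (W.getVert k) ≤ G.dist o (W.getVert (k + 1)) + 1 := by
    rcases lt_or_ge k W.length with hk | hk
    · have := (W.adj_getVert_succ hk).diff_dist_adj (u := o)
      omega
    · rw [W.getVert_of_length_le hk, W.getVert_of_length_le (by omega)]
      omega
  have shift (i d : ℕ) : G.dist o (W.getVert (i + d)) ≤ G.dist o (W.getVert i) + d ∧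
      G.dist o (W.getVert i) ≤ G.dist o (W.getVert (i + d)) + d := by
    induction d with
    | zero => simp
    | succ d ih =>
      have := step (i + d)
      rw [← add_assoc]
      omega
  rcases le_total i j with h | h
  · obtain ⟨d, rfl⟩ := Nat.exists_eq_add_of_le h
    have := shift i d
    omega
  · obtain ⟨d, rfl⟩ := Nat.exists_eq_add_of_le h
    have := shift j d
    omega

lemma dist_getVert_eq_of_injOn (W : G.Walk o b) {k : ℕ}
    (hW : Set.InjOn (fun i => G.dist o (W.getVert i)) (Set.Icc 0 k)) {i : ℕ} (hi : i ≤ k) :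
    G.dist o (W.getVert i) = i := by
  induction i using Nat.strong_induction_on with
  | _ i ih =>
    have hle : G.dist o (W.getVert i) ≤ i := by
      simpa using W.dist_getVert_le_dist_getVert_add o i 0
    by_contra hne
    have hlt : G.dist o (W.getVert i) < i := lt_of_le_of_ne hle hne
    have := hW ⟨Nat.zero_le _, (hlt.trans_le hi).le⟩ ⟨Nat.zero_le _, hi⟩
      (ih _ hlt (hlt.le.trans hi))
    omega

lemma dist_getVert_eq_of_length_eq_dist (W : G.Walk o b) (hW : W.length = G.dist o b) {i : ℕ}
    (hi : i ≤ W.length) : G.dist o (W.getVert i) = i := by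
  have h1 := W.dist_getVert_le_dist_getVert_add o i 0
  have h2 := W.dist_getVert_le_dist_getVert_add o W.length i
  simp only [getVert_zero, dist_self, getVert_length] at h1 h2
  omega

lemma getVert_dropUntil [DecidableEq V] (W : G.Walk a b) (h : w ∈ W.support) (i : ℕ) :
    (W.dropUntil w h).getVert i = W.getVert ((W.takeUntil w h).length + i) := by
  simp [dropUntil_eq_drop, length_takeUntil]

lemma IsPath.length_takeUntil_of_getVert_eq [DecidableEq V] {W : G.Walk a b} (hW : W.IsPath)
    {k : ℕ} (hk : k ≤ W.length) (h : w ∈ W.support) (hw : W.getVert k = w) :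
    (W.takeUntil w h).length = k :=
  hW.getVert_injOn (W.length_takeUntil_le_length h) hk (by rw [getVert_length_takeUntil, hw])

lemma IsPath.exists_getVert_of_mem_takeUntil_dropUntil [DecidableEq V] {s t x : V}
    {P : G.Walk a b} (hP : P.IsPath)
    (hs : s ∈ P.support) (ht : t ∈ (P.dropUntil s hs).support)
    (hx : x ∈ ((P.dropUntil s hs).takeUntil t ht).support) :
    ∃ i, (P.takeUntil s hs).length ≤ i ∧
      i ≤ (P.takeUntil t (P.support_dropUntil_subset_support hs ht)).length ∧
      P.getVert i = x := by
  obtain ⟨k, rfl, hk⟩ := mem_support_iff_exists_getVert.mp hx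
  have hlen := congrArg length (P.take_spec hs)
  have hD := (P.dropUntil s hs).length_takeUntil_le_length ht
  rw [length_append] at hlen
  refine ⟨(P.takeUntil s hs).length + k, by omega, ?_,
    by rw [getVert_takeUntil ht hk, getVert_dropUntil]⟩
  rw [hP.length_takeUntil_of_getVert_eq (k := (P.takeUntil s hs).length +
    ((P.dropUntil s hs).takeUntil t ht).length) (by omega) _
    ((getVert_dropUntil P hs _).symm.trans (getVert_length_takeUntil ht))]
  omega

lemma IsPath.eq_succ_or_eq_succ_of_toSubgraph_adj {P : G.Walk a b}
    (hP : P.IsPath) {i j : ℕ} (hi : i ≤ P.length) (hj : j ≤ P.length)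
    (h : P.toSubgraph.Adj (P.getVert i) (P.getVert j)) : j = i + 1 ∨ i = j + 1 := by
  obtain ⟨k, hk, hkL⟩ := P.toSubgraph_adj_iff.mp h
  have inj {x y : ℕ} (hx : x ≤ P.length) (hy : y ≤ P.length)
      (hxy : P.getVert x = P.getVert y) : x = y := hP.getVert_injOn hx hy hxy
  rcases Sym2.eq_iff.mp hk with ⟨h1, h2⟩ | ⟨h1, h2⟩
  · have := inj (by omega) hi h1
    have := inj (by omega) hj h2
    omega
  · have := inj (by omega) hj h1
    have := inj (by omega) hi h2
    omega

lemma IsPath.end_notMem_support_take {P : G.Walk a b} (hP : P.IsPath) {j : ℕ}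
    (hj : j < P.length) : b ∉ (P.take j).support := by
  intro hb
  obtain ⟨i, hi, hij⟩ := mem_support_iff_exists_getVert.mp hb
  rw [take_getVert] at hi
  have := (hP.getVert_eq_end_iff (by omega)).1 hi
  omega

lemma isInducedPath_of_forall_not_adj (W : G.Walk a b)
    (hW : ∀ i j, i + 1 < j → j ≤ W.length →
      W.getVert i ≠ W.getVert j ∧ ¬G.Adj (W.getVert i) (W.getVert j)) :
    IsInducedPath G W := by
  have hconsec {i j : ℕ} (hij : i < j) (hj : j ≤ W.length)
      (h : W.getVert i = W.getVert j ∨ G.Adj (W.getVert i) (W.getVert j)) : j = i + 1 := by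
    by_contra hne
    have := hW i j (by omega) hj
    tauto
  refine ⟨(IsPath.getVert_injOn_iff W).mp fun i hi j hj hij => ?_, fun x y hx hy hxy => ?_⟩
  · by_contra hne
    wlog hlt : i < j generalizing i j
    · exact this _ hj _ hi hij.symm (Ne.symm hne) (by omega)
    obtain rfl := hconsec hlt hj (Or.inl hij)
    exact (W.adj_getVert_succ (Nat.lt_of_succ_le hj)).ne hij
  · obtain ⟨i, rfl, hi⟩ := mem_support_iff_exists_getVert.mp hx
    obtain ⟨j, rfl, hj⟩ := mem_support_iff_exists_getVert.mp hy
    rcases lt_trichotomy i j with hlt | rfl | hlt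
    · obtain rfl := hconsec hlt hj (Or.inr hxy)
      exact W.toSubgraph_adj_getVert (by omega)
    · exact absurd hxy G.irrefl
    · obtain rfl := hconsec hlt hi (Or.inr hxy.symm)
      exact (W.toSubgraph_adj_getVert (by omega)).symm

lemma exists_isInducedPath_support_subset (W : G.Walk a b) :
    ∃ R : G.Walk a b,
      IsInducedPath G R ∧ R.length ≤ W.length ∧ R.support ⊆ W.support := by
  induction hn : W.length using Nat.strong_induction_on generalizing W with
  | _ n ih =>
  by_cases hchord : ∃ i j, i + 1 < j ∧ j ≤ W.length ∧
      (W.getVert i = W.getVert j ∨ G.Adj (W.getVert i) (W.getVert j))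
  · obtain ⟨i, j, hij, hj, hshort⟩ := hchord
    obtain ⟨M, hM, hMs⟩ : ∃ M : G.Walk (W.getVert i) (W.getVert j),
        M.length ≤ 1 ∧ M.support ⊆ W.support := by
      rcases hshort with he | hadj
      · exact ⟨nil.copy rfl he, by simp, by simp [getVert_mem_support]⟩
      · exact ⟨hadj.toWalk, by simp, by simp [getVert_mem_support]⟩
    obtain ⟨R, hR, hRl, hRs⟩ :=
      ih _ (by simp; omega) ((W.take i).append (M.append (W.drop j))) rfl
    refine ⟨R, hR, by simp at hRl; omega, List.Subset.trans hRs ?_⟩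
    simp only [support_append]
    refine List.append_subset.2 ⟨(W.isSubwalk_take i).support_subset, ?_⟩
    refine List.Subset.trans (List.tail_subset _) (List.append_subset.2 ⟨hMs, ?_⟩)
    exact List.Subset.trans (List.tail_subset _) (W.isSubwalk_drop j).support_subset
  · push Not at hchord
    exact ⟨W, W.isInducedPath_of_forall_not_adj hchord, hn.le, List.Subset.refl _⟩

end SimpleGraph.Walk

open Walk

section

variable {G : SimpleGraph V} {a b c o w u v : V}

lemma monoWalk_iff_injOn (W : G.Walk a b) :
    MonoWalk G o W ↔ Set.InjOn (fun i => G.dist o (W.getVert i)) (Set.Icc 0 W.length) := by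
  rw [MonoWalk, List.nodup_iff_injective_getElem]
  constructor
  · intro h i hi j hj hij
    have := @h ⟨i, by simpa using Nat.lt_succ_of_le hi.2⟩
      ⟨j, by simpa using Nat.lt_succ_of_le hj.2⟩
      (by simpa [getVert_eq_support_getElem _ hi.2, getVert_eq_support_getElem _ hj.2] using hij)
    exact congrArg Fin.val this
  · intro h i j hij
    have hi := i.2
    have hj := j.2
    simp only [List.length_map, length_support] at hi hj
    simp only [List.getElem_map, support_getElem_eq_getVert] at hij
    exact Fin.ext (h ⟨Nat.zero_le _, by omega⟩ ⟨Nat.zero_le _, by omega⟩ hij)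

lemma monoWalk_takeUntil_iff [DecidableEq V] (P : G.Walk a b) (h : w ∈ P.support) :
    MonoWalk G o (P.takeUntil w h) ↔
      Set.InjOn (fun i => G.dist o (P.getVert i)) (Set.Icc 0 (P.takeUntil w h).length) := by
  rw [monoWalk_iff_injOn]
  exact Set.EqOn.injOn_iff fun i hi => by simp only [getVert_takeUntil h hi.2]

lemma monoWalk_dropUntil_iff [DecidableEq V] (P : G.Walk a b) (h : w ∈ P.support) :
    MonoWalk G o (P.dropUntil w h) ↔
      Set.InjOn (fun i => G.dist o (P.getVert i)) (Set.Icc (P.takeUntil w h).length P.length) := by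
  have hlen := congrArg length (P.take_spec h)
  rw [length_append] at hlen
  rw [monoWalk_iff_injOn]
  simp only [getVert_dropUntil]
  constructor
  · rintro hinj i ⟨hi, hi'⟩ j ⟨hj, hj'⟩ hij
    have := @hinj (i - (P.takeUntil w h).length) ⟨Nat.zero_le _, by omega⟩
      (j - (P.takeUntil w h).length) ⟨Nat.zero_le _, by omega⟩
      (by simpa [Nat.add_sub_cancel' hi, Nat.add_sub_cancel' hj] using hij)
    omega
  · rintro hinj i ⟨-, hi⟩ j ⟨-, hj⟩ hij
    have := hinj ⟨Nat.le_add_right _ _, by omega⟩ ⟨Nat.le_add_right _ _, by omega⟩ hij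
    omega

lemma Straight.dist_add_dist (hG : Straight G u v) (x : V) :
    G.dist u x + G.dist x v = G.dist u v := by
  classical
  obtain ⟨Q, ⟨-, hQ⟩, hx⟩ := hG x
  have hlen := congrArg length (Q.take_spec hx)
  rw [length_append] at hlen
  have h1 := dist_le (Q.takeUntil x hx)
  have h2 := dist_le (Q.dropUntil x hx)
  have h3 := (Q.takeUntil x hx).reachable.dist_triangle_left v
  omega

lemma Straight.symm (hG : Straight G u v) : Straight G v u := fun x => by
  obtain ⟨Q, ⟨hQp, hQ⟩, hx⟩ := hG x
  exact ⟨Q.reverse, ⟨hQp.reverse, by rw [length_reverse, hQ, dist_comm]⟩, by simpa using hx⟩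

lemma Straight.dist_getVert_reverse (hG : Straight G u v) (P : G.Walk u v) (i : ℕ) :
    G.dist v (P.reverse.getVert i) + G.dist u (P.getVert (P.length - i)) = G.dist u v := by
  rw [getVert_reverse, dist_comm, add_comm, hG.dist_add_dist]

lemma Straight.injOn_reverse_iff (hG : Straight G u v) (P : G.Walk u v) {i j : ℕ}
    (hij : i ≤ j) (hj : j ≤ P.length) :
    Set.InjOn (fun k => G.dist v (P.reverse.getVert k)) (Set.Icc (P.length - j) (P.length - i)) ↔
      Set.InjOn (fun k => G.dist u (P.getVert k)) (Set.Icc i j) := by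
  have hrev (k : ℕ) (hk : k ≤ P.length) :
      G.dist v (P.reverse.getVert (P.length - k)) + G.dist u (P.getVert k) = G.dist u v := by
    simpa [Nat.sub_sub_self hk] using hG.dist_getVert_reverse P (P.length - k)
  constructor
  · rintro hinj x ⟨hx1, hx2⟩ y ⟨hy1, hy2⟩ hxy
    have hx := hrev x (by omega)
    have hy := hrev y (by omega)
    simp only at hxy
    have := @hinj (P.length - x) ⟨by omega, by omega⟩ (P.length - y) ⟨by omega, by omega⟩
      (by simp only; omega)
    omega
  · rintro hinj x ⟨hx1, hx2⟩ y ⟨hy1, hy2⟩ hxy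
    have hx := hrev (P.length - x) (by omega)
    have hy := hrev (P.length - y) (by omega)
    rw [Nat.sub_sub_self (show x ≤ P.length by omega)] at hx
    rw [Nat.sub_sub_self (show y ≤ P.length by omega)] at hy
    simp only at hxy
    have := @hinj (P.length - x) ⟨by omega, by omega⟩ (P.length - y) ⟨by omega, by omega⟩
      (by simp only; omega)
    omega

lemma IsInducedPath.reverse {P : G.Walk a b} (hP : IsInducedPath G P) :
    IsInducedPath G P.reverse :=
  ⟨hP.1.reverse, fun x y hx hy hxy => by
    rw [toSubgraph_reverse]
    exact hP.2 x y (by simpa using hx) (by simpa using hy) hxy⟩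

lemma IsShortestPath.reverse {P : G.Walk a b} (hP : IsShortestPath G P) :
    IsShortestPath G P.reverse :=
  ⟨hP.1.reverse, by rw [length_reverse, hP.2, dist_comm]⟩

lemma IsTrailPath.reverse {P : G.Walk u v} (hP : IsTrailPath G u v P) :
    IsTrailPath G v u P.reverse :=
  ⟨hP.1.reverse, fun h => hP.2 (by simpa using h.reverse)⟩

lemma IsShortestTrail.reverse {P : G.Walk u v} (hP : IsShortestTrail G u v P) :
    IsShortestTrail G v u P.reverse :=
  ⟨hP.1.reverse, fun Q hQ => by simpa using hP.2 Q.reverse hQ.reverse⟩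

lemma IsTrailPath.dist_lt_length {P : G.Walk u v} (hP : IsTrailPath G u v P) :
    G.dist u v < P.length :=
  lt_of_le_of_ne (dist_le P) fun h => hP.2 ⟨hP.1.1, h.symm⟩

lemma IsInducedPath.getVert_eq_of_forall_mem {P : G.Walk a b} (hP : IsInducedPath G P)
    {R : G.Walk a c} (hR : R.IsPath) {k : ℕ} (hkP : k ≤ P.length) (hkR : k ≤ R.length)
    (hmem : ∀ i ≤ k, R.getVert i ∈ P.support) {i : ℕ} (hi : i ≤ k) :
    R.getVert i = P.getVert i := by
  induction i using Nat.strong_induction_on with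
  | _ i ih =>
  rcases i with _ | i
  · simp
  obtain ⟨l, hl, hlP⟩ := mem_support_iff_exists_getVert.mp (hmem (i + 1) hi)
  have hRi := ih i (by omega) (by omega)
  have hadj : G.Adj (P.getVert i) (P.getVert l) := by
    rw [← hRi, hl]
    exact R.adj_getVert_succ (by omega)
  rcases hP.1.eq_succ_or_eq_succ_of_toSubgraph_adj (by omega) hlP
      (hP.2 _ _ (P.getVert_mem_support i) (P.getVert_mem_support l) hadj) with hl' | hl'
  · rw [← hl, hl']
  · have := hR.getVert_injOn (show i + 1 ≤ R.length by omega) (show l ≤ R.length by omega)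
      (by rw [← hl, ih l (by omega) (by omega)])
    omega

lemma IsInducedPath.exists_getVert_eq_of_end_notMem_take {P : G.Walk a b}
    (hP : IsInducedPath G P) {R : G.Walk a c} (hR : R.IsPath) (hRP : R.length ≤ P.length)
    {j : ℕ} (hc : c ∉ (P.take j).support) :
    ∃ k < R.length, (∀ i ≤ k, R.getVert i = P.getVert i) ∧
      R.getVert (k + 1) ∉ (P.take j).support := by
  classical
  have hend : R.getVert R.length ∉ (P.take j).support := by rwa [getVert_length]
  have hex : ∃ e, R.getVert e ∉ (P.take j).support := ⟨_, hend⟩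
  obtain ⟨k, hk⟩ : ∃ k, Nat.find hex = k + 1 := Nat.exists_eq_add_one.mpr <|
    Nat.pos_of_ne_zero fun h0 =>
      Nat.find_spec hex (by rw [h0, getVert_zero]; exact start_mem_support _)
  have hle := Nat.find_min' hex hend
  have hmem (i : ℕ) (hi : i ≤ k) : R.getVert i ∈ (P.take j).support := by
    by_contra hi'
    have := Nat.find_min' hex hi'
    omega
  refine ⟨k, by omega, fun i hi => hP.getVert_eq_of_forall_mem hR (by omega) (by omega)
    (fun i hi => (P.isSubwalk_take j).support_subset (hmem i hi)) hi, hk ▸ Nat.find_spec hex⟩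

lemma IsShortestTrail.exists_isShortestPath_of_length_add_lt {x : V} {P : G.Walk u v}
    (hP : IsShortestTrail G u v P) (A : G.Walk u x) (B : G.Walk x v)
    (hAB : A.length + B.length < P.length) :
    ∃ R : G.Walk u v,
      IsShortestPath G R ∧ ∀ z ∈ R.support, z ∈ A.support ∨ z ∈ B.support := by
  obtain ⟨R, hR, hRl, hRs⟩ := (A.append B).exists_isInducedPath_support_subset
  refine ⟨R, ?_, fun z hz => (mem_support_append_iff A B).mp (hRs hz)⟩
  by_contra hR'
  have := hP.2 R ⟨hR, hR'⟩
  rw [length_append] at hRl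
  omega

/-- `IsTwistPair` in terms of the positions `ps` and `pt` of `s` and `t` on `P`. -/
structure IsTwistIndex (P : G.Walk u v) (ps pt : ℕ) : Prop where
  ps_le_length : ps ≤ P.length
  pt_le_length : pt ≤ P.length
  injOn_prefix : Set.InjOn (fun i => G.dist u (P.getVert i)) (Set.Icc 0 ps)
  injOn_suffix : Set.InjOn (fun i => G.dist u (P.getVert i)) (Set.Icc pt P.length)
  le_of_injOn_prefix : ∀ k ≤ P.length,
    Set.InjOn (fun i => G.dist u (P.getVert i)) (Set.Icc 0 k) → k ≤ ps
  ge_of_injOn_suffix : ∀ k ≤ P.length,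
    Set.InjOn (fun i => G.dist u (P.getVert i)) (Set.Icc k P.length) → pt ≤ k

variable {P : G.Walk u v} {ps pt : ℕ}

lemma IsTwistPair.isTwistIndex [DecidableEq V] {s t : V} (hP : P.IsPath)
    (h : IsTwistPair G u v P s t) (hs : s ∈ P.support) (ht : t ∈ P.support) :
    IsTwistIndex P (P.takeUntil s hs).length (P.takeUntil t ht).length := by
  obtain ⟨hs', ht', hmono_s, hmono_t, hmax_s, hmax_t⟩ := h
  have hlen (w : V) (hw : w ∈ P.support) :
      (P.takeUntil w hw).length + (P.dropUntil w hw).length = P.length := by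
    rw [← length_append, P.take_spec hw]
  refine ⟨P.length_takeUntil_le_length hs, P.length_takeUntil_le_length ht,
    (monoWalk_takeUntil_iff P hs).1 hmono_s, (monoWalk_dropUntil_iff P ht).1 hmono_t,
    fun k hk hinj => ?_, fun k hk hinj => ?_⟩
  · have hk' := hP.length_takeUntil_of_getVert_eq hk (P.getVert_mem_support k) rfl
    have := hmax_s _ _ ((monoWalk_takeUntil_iff P _).2 (by rwa [hk']))
    omega
  · have hk' := hP.length_takeUntil_of_getVert_eq hk (P.getVert_mem_support k) rfl
    have := hmax_t _ _ ((monoWalk_dropUntil_iff P _).2 (by rwa [hk']))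
    have := hlen _ (P.getVert_mem_support k)
    have := hlen t ht
    omega

lemma IsTwistIndex.reverse (hG : Straight G u v) (h : IsTwistIndex P ps pt) :
    IsTwistIndex P.reverse (P.length - pt) (P.length - ps) := by
  have hL := P.length_reverse
  refine ⟨by omega, by omega, ?_, ?_, fun k hk hinj => ?_, fun k hk hinj => ?_⟩
  · simpa using (hG.injOn_reverse_iff P h.pt_le_length le_rfl).2 h.injOn_suffix
  · simpa [hL] using (hG.injOn_reverse_iff P (Nat.zero_le ps) h.ps_le_length).2 h.injOn_prefix
  · rw [hL] at hk
    have := h.ge_of_injOn_suffix (P.length - k) (by omega)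
      ((hG.injOn_reverse_iff P (by omega) le_rfl).1 (by rwa [Nat.sub_self, Nat.sub_sub_self hk]))
    omega
  · rw [hL] at hk hinj
    have := h.le_of_injOn_prefix (P.length - k) (by omega)
      ((hG.injOn_reverse_iff P (Nat.zero_le _) (by omega)).1
        (by rwa [Nat.sub_zero, Nat.sub_sub_self hk]))
    omega

lemma IsTwistIndex.dist_getVert_add_length_sub (hG : Straight G u v) (h : IsTwistIndex P ps pt)
    {i : ℕ} (hpt : pt ≤ i) (hi : i ≤ P.length) :
    G.dist u (P.getVert i) + (P.length - i) = G.dist u v := by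
  have h1 := P.reverse.dist_getVert_eq_of_injOn (h.reverse hG).injOn_prefix
    (i := P.length - i) (by omega)
  have h2 := hG.dist_getVert_reverse P (P.length - i)
  rw [Nat.sub_sub_self hi] at h2
  omega

lemma IsTwistIndex.dist_lt_dist_getVert_add (h : IsTwistIndex P ps pt) {j : ℕ} (hj : j < pt) :
    G.dist u v < G.dist u (P.getVert j) + (P.length - j) := by
  by_contra! hle
  have hpt := h.pt_le_length
  refine absurd (h.ge_of_injOn_suffix j (by omega) ?_) (by omega)
  have key (z : ℕ) (hz1 : j ≤ z) (hz2 : z ≤ P.length) :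
      G.dist u (P.getVert z) + (P.length - z) = G.dist u v := by
    have h1 := P.dist_getVert_le_dist_getVert_add u z j
    have h2 := P.dist_getVert_le_dist_getVert_add u P.length z
    rw [getVert_length] at h2
    omega
  rintro x ⟨hx1, hx2⟩ y ⟨hy1, hy2⟩ hxy
  have := key x hx1 hx2
  have := key y hy1 hy2
  simp only at hxy
  omega

lemma IsTwistIndex.dist_getVert_le_pred (hG : Straight G u v) (h : IsTwistIndex P ps pt)
    (hpt : 0 < pt) : G.dist u (P.getVert pt) ≤ G.dist u (P.getVert (pt - 1)) := by
  by_contra! hlt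
  have hL := h.pt_le_length
  refine absurd (h.ge_of_injOn_suffix (pt - 1) (by omega) ?_) (by omega)
  have key (z : ℕ) (hz1 : pt ≤ z) (hz2 : z ≤ P.length) :=
    h.dist_getVert_add_length_sub hG hz1 hz2
  have := key pt le_rfl hL
  rintro x ⟨hx1, hx2⟩ y ⟨hy1, hy2⟩ hxy
  simp only at hxy
  rcases (show x = pt - 1 ∨ pt ≤ x by omega) with rfl | hx <;>
    rcases (show y = pt - 1 ∨ pt ≤ y by omega) with rfl | hy
  · rfl
  · have := key y hy hy2
    omega
  · have := key x hx hx2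
    omega
  · have := key x hx hx2
    have := key y hy hy2
    omega

lemma IsTwistIndex.dist_getVert_le_of_lt (hG : Straight G u v) (hP : IsShortestTrail G u v P)
    (h : IsTwistIndex P ps pt) {j : ℕ} (hj : j < pt) : G.dist u (P.getVert j) ≤ ps := by
  by_contra! hjs
  have hpt := h.pt_le_length
  have hn := hP.1.dist_lt_length
  have hkey := h.dist_lt_dist_getVert_add hj
  obtain ⟨Q, ⟨-, hQ⟩, hxQ⟩ := hG (P.getVert j)
  obtain ⟨m, hQm, hm⟩ := mem_support_iff_exists_getVert.mp hxQ
  have hQh (e : ℕ) (he : e ≤ Q.length) : G.dist u (Q.getVert e) = e :=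
    Q.dist_getVert_eq_of_length_eq_dist hQ he
  have hmj : G.dist u (P.getVert j) = m := hQm ▸ hQh m hm
  obtain ⟨R, ⟨hRp, hR⟩, hRs⟩ := hP.exists_isShortestPath_of_length_add_lt (P.take j)
    ((Q.drop m).copy hQm rfl) (by simp; omega)
  have hRh (e : ℕ) (he : e ≤ R.length) : G.dist u (R.getVert e) = e :=
    R.dist_getVert_eq_of_length_eq_dist hR he
  obtain ⟨k, hkR, hRP, hout⟩ := hP.1.1.exists_getVert_eq_of_end_notMem_take hRp (by omega)
    (hP.1.1.1.end_notMem_support_take (j := j) (by omega))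
  have hkps : k ≤ ps := by
    refine h.le_of_injOn_prefix k (by omega) fun x ⟨_, hx⟩ y ⟨_, hy⟩ hxy => ?_
    simp only at hxy
    rwa [← hRP x hx, ← hRP y hy, hRh x (by omega), hRh y (by omega)] at hxy
  -- After leaving `P[u,x]`, `R` is on `Q[x,v]` at height `k + 1 ≤ h(x)`, so it is at `x`.
  obtain hin | hin := hRs _ (R.getVert_mem_support (k + 1))
  · exact hout hin
  obtain ⟨e, he, hel⟩ := mem_support_iff_exists_getVert.mp hin
  simp only [getVert_copy, drop_getVert, length_copy, drop_length] at he hel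
  have := hRh (k + 1) (by omega)
  rw [← he, hQh (m + e) (by omega)] at this
  obtain rfl : e = 0 := by omega
  exact hout (by rw [← he, Nat.add_zero, hQm]; exact end_mem_support _)

lemma IsTwistIndex.dist_getVert_le (hG : Straight G u v) (hP : IsShortestTrail G u v P)
    (h : IsTwistIndex P ps pt) {i : ℕ} (hi : i ≤ pt) :
    G.dist u (P.getVert i) ≤ G.dist u (P.getVert ps) := by
  rw [P.dist_getVert_eq_of_injOn h.injOn_prefix le_rfl]
  rcases hi.lt_or_eq with hi | rfl
  · exact h.dist_getVert_le_of_lt hG hP hi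
  rcases Nat.eq_zero_or_pos i with rfl | hpos
  · simp
  exact (h.dist_getVert_le_pred hG hpos).trans (h.dist_getVert_le_of_lt hG hP (by omega))

lemma IsTwistIndex.le_dist_getVert (hG : Straight G u v) (hP : IsShortestTrail G u v P)
    (h : IsTwistIndex P ps pt) {i : ℕ} (hi : ps ≤ i) (hiL : i ≤ P.length) :
    G.dist u (P.getVert pt) ≤ G.dist u (P.getVert i) := by
  have := (h.reverse hG).dist_getVert_le hG.symm hP.reverse (i := P.length - i) (by omega)
  have h1 := hG.dist_getVert_reverse P (P.length - i)
  have h2 := hG.dist_getVert_reverse P (P.length - pt)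
  rw [Nat.sub_sub_self hiL] at h1
  rw [Nat.sub_sub_self h.pt_le_length] at h2
  omega

end

theorem statement0_general [DecidableEq V] (G : SimpleGraph V) (u v : V)
    (hstraight : Straight G u v)
    (P : G.Walk u v) (hP : IsShortestTrail G u v P)
    (s t : V) (htwist : IsTwistPair G u v P s t)
    (hs : s ∈ P.support) (ht : t ∈ (P.dropUntil s hs).support) :
    ∀ x ∈ ((P.dropUntil s hs).takeUntil t ht).support,
      G.dist u t ≤ G.dist u x ∧ G.dist u x ≤ G.dist u s := by
  intro x hx
  have htP := P.support_dropUntil_subset_support hs ht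
  have htw := htwist.isTwistIndex hP.1.1.1 hs htP
  obtain ⟨i, hsi, hit, rfl⟩ := hP.1.1.1.exists_getVert_of_mem_takeUntil_dropUntil hs ht hx
  rw [← P.getVert_length_takeUntil hs, ← P.getVert_length_takeUntil htP]
  exact ⟨htw.le_dist_getVert hstraight hP hsi (hit.trans htw.pt_le_length),
    htw.dist_getVert_le hstraight hP hit⟩

/-- If `P` is a shortest `uv`-trail of a `uv`-straight graph `G`
with twist pair `(s, t)`, then every vertex `x` of `P[s,t]` satisfies
`h(t) ≤ h(x) ≤ h(s)`. -/
theorem statement0 [Fintype V] [DecidableEq V] (G : SimpleGraph V) (u v : V)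
    (hstraight : Straight G u v)
    (P : G.Walk u v) (hP : IsShortestTrail G u v P)
    (s t : V) (htwist : IsTwistPair G u v P s t)
    (hs : s ∈ P.support) (ht : t ∈ (P.dropUntil s hs).support) :
    ∀ x ∈ ((P.dropUntil s hs).takeUntil t ht).support,
      G.dist u t ≤ G.dist u x ∧ G.dist u x ≤ G.dist u s :=
  statement0_general G u v hstraight P hP s t htwist hs ht
end

section
/- Let G be a graph with distinguished vertices u and v and heights h(x) = d_G(u,x). Then every monotone xy-path of G is a shortest xy-path of G. Moreover, if G is uv-straight, then every shortest xy-path of G with x ∈ {u,v} or y ∈ {u,v} is monotone. -/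
open SimpleGraph

variable {V : Type*}

/-!
Heights change by at most one along an edge, so the heights at the ends of any walk differ by at
most its length. Along a walk with pairwise distinct heights they cannot turn back (by the
discrete intermediate value property the turning height would repeat), so such a walk has length
exactly `|h(y) - h(x)| ≤ d(x, y)`. Conversely a walk of length `|h(y) - h(x)|` changes height at
every step in the same direction, so its heights are distinct. A shortest path from `u` has length
`|h(y) - h(u)|` trivially, and one from `v` does too when `G` is `uv`-straight, since then
`h(z) + d(z, v) = d(u, v)` for every vertex `z`.
-/

namespace SimpleGraph

namespace Walk

variable {G : SimpleGraph V} {f : V → ℤ} (hf : ∀ a b, G.Adj a b → |f a - f b| ≤ 1)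
include hf

theorem abs_sub_le_length {x y : V} (W : G.Walk x y) : |f y - f x| ≤ W.length := by
  induction W with
  | nil => simp
  | @cons a b c hab W ih =>
    rw [length_cons, Nat.cast_succ]
    calc |f c - f a| ≤ |f c - f b| + |f b - f a| := abs_sub_le _ _ _
      _ ≤ W.length + 1 := add_le_add ih (abs_sub_comm (f a) (f b) ▸ hf a b hab)

theorem exists_mem_support_eq {x y : V} (W : G.Walk x y) {k : ℤ} (hxk : f x ≤ k)
    (hky : k ≤ f y) : ∃ z ∈ W.support, f z = k := by
  induction W with
  | nil => exact ⟨_, start_mem_support _, le_antisymm hxk hky⟩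
  | @cons a b c hab W ih =>
    by_cases hka : k ≤ f a
    · exact ⟨a, start_mem_support _, le_antisymm hxk hka⟩
    · have hb := (abs_le.mp (hf a b hab)).1
      obtain ⟨z, hz, hzk⟩ := ih (by linarith) hky
      exact ⟨z, List.mem_cons_of_mem _ hz, hzk⟩

theorem length_eq_abs_sub_of_nodup {x y : V} (W : G.Walk x y) (hW : (W.support.map f).Nodup) :
    (W.length : ℤ) = |f y - f x| := by
  induction W with
  | nil => simp
  | @cons a b c hab W ih =>
    rw [support_cons, List.map_cons, List.nodup_cons, List.mem_map] at hW
    have hne : ∀ z ∈ W.support, f z ≠ f a := fun z hz hza => hW.1 ⟨z, hz, hza⟩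
    have hup : ¬ (f b ≤ f a ∧ f a ≤ f c) := fun ⟨h₁, h₂⟩ =>
      let ⟨z, hz, hza⟩ := W.exists_mem_support_eq hf h₁ h₂
      hne z hz hza
    have hdown : ¬ (f c ≤ f a ∧ f a ≤ f b) := fun ⟨h₁, h₂⟩ =>
      let ⟨z, hz, hza⟩ := W.reverse.exists_mem_support_eq hf h₁ h₂
      hne z (by simpa using hz) hza
    have hb := abs_le.mp (hf a b hab)
    have hba := hne b W.start_mem_support
    have ih := ih hW.2
    rw [eq_comm, abs_eq (Nat.cast_nonneg _)] at ih ⊢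
    rw [length_cons, Nat.cast_succ]
    omega

theorem nodup_map_support_of_length_le {x y : V} (W : G.Walk x y)
    (hW : (W.length : ℤ) ≤ f y - f x) : (W.support.map f).Nodup := by
  induction W with
  | nil => simp
  | @cons a b c hab W ih =>
    have hb := abs_le.mp (hf a b hab)
    rw [length_cons, Nat.cast_succ] at hW
    rw [support_cons, List.map_cons, List.nodup_cons, List.mem_map]
    refine ⟨?_, ih (by linarith)⟩
    rintro ⟨z, hz, hza⟩
    obtain ⟨q, r, rfl⟩ := mem_support_iff_exists_append.mp hz
    have hr := abs_le.mp (r.abs_sub_le_length hf)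
    rw [length_append, Nat.cast_add] at hW
    omega

theorem nodup_map_support_iff {x y : V} (W : G.Walk x y) :
    (W.support.map f).Nodup ↔ (W.length : ℤ) = |f y - f x| := by
  refine ⟨W.length_eq_abs_sub_of_nodup hf, fun h => ?_⟩
  rcases le_total (f x) (f y) with hxy | hyx
  · exact W.nodup_map_support_of_length_le hf (by rw [h, abs_of_nonneg (by linarith)])
  · have := W.reverse.nodup_map_support_of_length_le hf
      (by rw [length_reverse, h, abs_of_nonpos (by linarith)]; linarith)
    rwa [support_reverse, List.map_reverse, List.nodup_reverse] at this

end Walk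

theorem Walk.dist_add_dist_of_length_eq_dist {G : SimpleGraph V} {x y z : V} (P : G.Walk x y)
    (hP : P.length = G.dist x y) (hz : z ∈ P.support) :
    G.dist x z + G.dist z y = G.dist x y := by
  obtain ⟨q, r, rfl⟩ := mem_support_iff_exists_append.mp hz
  have := q.reachable.dist_triangle_left y
  have := dist_le q
  have := dist_le r
  rw [length_append] at hP
  omega

theorem Adj.abs_dist_sub_dist_le_one {G : SimpleGraph V} {a b : V} (hab : G.Adj a b) (u : V) :
    |(G.dist u a : ℤ) - G.dist u b| ≤ 1 := by
  rw [abs_le]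
  rcases hab.diff_dist_adj (u := u) with h | h | h <;> omega

end SimpleGraph

theorem monoWalk_iff_length_eq_abs_sub (G : SimpleGraph V) (u : V) {x y : V} (W : G.Walk x y) :
    MonoWalk G u W ↔ (W.length : ℤ) = |(G.dist u y : ℤ) - G.dist u x| := by
  rw [MonoWalk, ← List.nodup_map_iff (Nat.cast_injective (R := ℤ)), List.map_map]
  exact W.nodup_map_support_iff fun _ _ hab => hab.abs_dist_sub_dist_le_one u

theorem isShortestPath_of_monoWalk {G : SimpleGraph V} {u x y : V} {P : G.Walk x y}
    (hP : P.IsPath) (hm : MonoWalk G u P) : IsShortestPath G P := by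
  obtain ⟨Q, hQ⟩ := P.reachable.exists_walk_length_eq_dist
  have hlen : (P.length : ℤ) ≤ G.dist x y := by
    rw [(monoWalk_iff_length_eq_abs_sub G u P).mp hm, ← hQ]
    exact Q.abs_sub_le_length fun _ _ hab => hab.abs_dist_sub_dist_le_one u
  exact ⟨hP, le_antisymm (by exact_mod_cast hlen) (dist_le P)⟩

theorem Straight.dist_eq_abs_sub {G : SimpleGraph V} {u v x : V} (hst : Straight G u v)
    (hx : x = u ∨ x = v) (y : V) : (G.dist x y : ℤ) = |(G.dist u y : ℤ) - G.dist u x| := by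
  rcases hx with rfl | rfl
  · simp
  · obtain ⟨P, ⟨-, hP⟩, hy⟩ := hst y
    have := P.dist_add_dist_of_length_eq_dist hP hy
    rw [abs_of_nonpos (by omega), dist_comm]
    omega

theorem statement3_general (G : SimpleGraph V) (u v : V) :
    (∀ (x y : V) (P : G.Walk x y), P.IsPath → MonoWalk G u P →
      IsShortestPath G P) ∧
    (Straight G u v → ∀ (x y : V) (P : G.Walk x y),
      (x = u ∨ x = v ∨ y = u ∨ y = v) → IsShortestPath G P →
      MonoWalk G u P) := by
  refine ⟨fun x y P hP hm => isShortestPath_of_monoWalk hP hm, fun hst x y P hxy hP => ?_⟩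
  rw [monoWalk_iff_length_eq_abs_sub, hP.2]
  obtain hx | hy : (x = u ∨ x = v) ∨ (y = u ∨ y = v) := by tauto
  · exact hst.dist_eq_abs_sub hx y
  · rw [dist_comm, abs_sub_comm]
    exact hst.dist_eq_abs_sub hy x

/-- Every monotone `xy`-path of `G` is a shortest `xy`-path of
`G`; moreover, if `G` is `uv`-straight then every shortest `xy`-path of `G` with
`x ∈ {u, v}` or `y ∈ {u, v}` is monotone. -/
theorem statement3 [Fintype V] [DecidableEq V] (G : SimpleGraph V) (u v : V) :
    (∀ (x y : V) (P : G.Walk x y), P.IsPath → MonoWalk G u P →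
      IsShortestPath G P) ∧
    (Straight G u v → ∀ (x y : V) (P : G.Walk x y),
      (x = u ∨ x = v ∨ y = u ∨ y = v) → IsShortestPath G P →
      MonoWalk G u P) :=
  statement3_general G u v
end

section
/- Let G be a uv-straight graph and let Q be a monotone xy-path of G with h(x) ≤ h(y). Then G contains a monotone ux-path and a monotone yv-path, and for every monotone ux-path P and every monotone yv-path R of G, the concatenation P ∪ Q ∪ R is a monotone uv-path of G (in particular, a monotone uv-path of G containing Q exists). -/
open SimpleGraph

variable {V : Type*}

/-
A monotone walk that climbs from height `h(a)` to `h(b) ≥ h(a)` can never go down, so it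
climbs one level per edge and has length exactly `h(b) - h(a)`. Conversely a walk of
that length visits the heights `h(a), h(a) + 1, …, h(b)` in order. In a `uv`-straight graph
the prefix up to `x` and the suffix from `y` of a shortest `uv`-path through them are such
walks, and `P ∪ Q ∪ R` climbs from `h(u) = 0` to `h(v)` in `h(v)` steps.
-/

namespace SimpleGraph.Walk

variable {G : SimpleGraph V} (u : V)

theorem dist_le_dist_add_length {a b : V} (W : G.Walk a b) :
    G.dist u b ≤ G.dist u a + W.length :=
  (W.reachable.dist_triangle_right u).trans (Nat.add_le_add_left (dist_le W) _)

theorem exists_mem_support_dist_eq {a b : V} (W : G.Walk a b) {m : ℕ}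
    (ham : G.dist u a ≤ m) (hmb : m ≤ G.dist u b) :
    ∃ z ∈ W.support, G.dist u z = m := by
  induction W with
  | nil => exact ⟨_, List.mem_singleton_self _, le_antisymm ham hmb⟩
  | @cons a c b hadj W ih =>
    by_cases hma : m ≤ G.dist u a
    · exact ⟨a, W.support.mem_cons_self, le_antisymm ham hma⟩
    · have hcm : G.dist u c ≤ m := by
        have := hadj.toWalk.dist_le_dist_add_length u
        simp only [length_cons, length_nil] at this
        omega
      obtain ⟨z, hz, hzm⟩ := ih hcm hmb
      exact ⟨z, List.mem_cons_of_mem _ hz, hzm⟩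

theorem map_dist_support_eq_range' {a b : V} (W : G.Walk a b)
    (hW : G.dist u a + W.length = G.dist u b) :
    W.support.map (G.dist u) = List.range' (G.dist u a) (W.length + 1) := by
  induction W with
  | nil => rfl
  | @cons a c b hadj W ih =>
    have hac := hadj.toWalk.dist_le_dist_add_length u
    have hcb := W.dist_le_dist_add_length u
    simp only [length_cons, length_nil] at hW hac
    have hc : G.dist u c = G.dist u a + 1 := by omega
    rw [support_cons, List.map_cons, ih (by omega), hc]
    rfl

theorem monoWalk_of_dist_add_length_eq {a b : V} {W : G.Walk a b}
    (hW : G.dist u a + W.length = G.dist u b) : MonoWalk G u W := by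
  unfold MonoWalk
  rw [W.map_dist_support_eq_range' u hW]
  exact List.nodup_range'

section

variable [DecidableEq V] {u} {v z : V} {W : G.Walk u v}

theorem length_takeUntil_of_length_eq_dist (hW : W.length = G.dist u v)
    (hz : z ∈ W.support) : (W.takeUntil z hz).length = G.dist u z := by
  have hsplit := congrArg length (W.take_spec hz)
  rw [length_append] at hsplit
  have := dist_le (W.takeUntil z hz)
  have := (W.dropUntil z hz).dist_le_dist_add_length u
  omega

theorem dist_add_length_dropUntil_of_length_eq_dist
    (hW : W.length = G.dist u v) (hz : z ∈ W.support) :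
    G.dist u z + (W.dropUntil z hz).length = G.dist u v := by
  have hsplit := congrArg length (W.take_spec hz)
  rw [length_append] at hsplit
  rw [← W.length_takeUntil_of_length_eq_dist hW hz]
  omega

end

end SimpleGraph.Walk

namespace MonoWalk

variable {G : SimpleGraph V} {u a b : V} {W : G.Walk a b}

theorem isPath (hW : MonoWalk G u W) : W.IsPath :=
  (Walk.isPath_def W).mpr hW.of_map

theorem dist_add_length_eq (hW : MonoWalk G u W) (hab : G.dist u a ≤ G.dist u b) :
    G.dist u a + W.length = G.dist u b := by
  induction W with
  | nil => rfl
  | @cons a c b hadj W ih =>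
    unfold MonoWalk at hW
    rw [Walk.support_cons, List.map_cons, List.nodup_cons] at hW
    obtain ⟨ha_fresh, hW⟩ := hW
    have hac := hadj.toWalk.dist_le_dist_add_length u
    simp only [Walk.length_cons, Walk.length_nil] at hac ⊢
    have hmem : ∀ z ∈ W.support, G.dist u z ≠ G.dist u a := fun z hz hza =>
      ha_fresh (hza ▸ List.mem_map_of_mem hz)
    -- a return to height `h(a)` after the first step would repeat a height
    have hac' : G.dist u a < G.dist u c := by
      by_contra! hca
      obtain ⟨z, hz, hza⟩ := W.exists_mem_support_dist_eq u hca hab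
      exact hmem z hz hza
    have hcb : G.dist u c ≤ G.dist u b := by
      by_contra! hbc
      exact hmem b W.end_mem_support (by omega)
    have := ih hW hcb
    omega

end MonoWalk

namespace Straight

variable {G : SimpleGraph V} {u v : V}

theorem dist_le (hG : Straight G u v) (z : V) : G.dist u z ≤ G.dist u v := by
  classical
  obtain ⟨W, ⟨-, hW⟩, hz⟩ := hG z
  rw [← W.length_takeUntil_of_length_eq_dist hW hz, ← hW]
  exact W.length_takeUntil_le_length hz

theorem exists_monoWalk_from (hG : Straight G u v) (x : V) :
    ∃ P : G.Walk u x, P.IsPath ∧ MonoWalk G u P := by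
  classical
  obtain ⟨W, ⟨-, hW⟩, hx⟩ := hG x
  have hmono : MonoWalk G u (W.takeUntil x hx) :=
    Walk.monoWalk_of_dist_add_length_eq u <| by
      rw [W.length_takeUntil_of_length_eq_dist hW hx, dist_self, zero_add]
  exact ⟨_, hmono.isPath, hmono⟩

theorem exists_monoWalk_to (hG : Straight G u v) (y : V) :
    ∃ R : G.Walk y v, R.IsPath ∧ MonoWalk G u R := by
  classical
  obtain ⟨W, ⟨-, hW⟩, hy⟩ := hG y
  have hmono : MonoWalk G u (W.dropUntil y hy) :=
    Walk.monoWalk_of_dist_add_length_eq u (W.dist_add_length_dropUntil_of_length_eq_dist hW hy)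
  exact ⟨_, hmono.isPath, hmono⟩

end Straight

theorem statement5_general (G : SimpleGraph V) (u v : V)
    (hstraight : Straight G u v)
    (x y : V) (Q : G.Walk x y) (hQmono : MonoWalk G u Q)
    (hxy : G.dist u x ≤ G.dist u y) :
    (∃ P : G.Walk u x, P.IsPath ∧ MonoWalk G u P) ∧
    (∃ R : G.Walk y v, R.IsPath ∧ MonoWalk G u R) ∧
    (∀ (P : G.Walk u x) (R : G.Walk y v),
      P.IsPath → MonoWalk G u P → R.IsPath → MonoWalk G u R →
      (P.append (Q.append R)).IsPath ∧ MonoWalk G u (P.append (Q.append R))) := by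
  refine ⟨hstraight.exists_monoWalk_from x, hstraight.exists_monoWalk_to y,
    fun P R _ hPmono _ hRmono => ?_⟩
  have hP := hPmono.dist_add_length_eq (by rw [dist_self]; exact Nat.zero_le _)
  have hQ := hQmono.dist_add_length_eq hxy
  have hR := hRmono.dist_add_length_eq (hstraight.dist_le y)
  have hmono : MonoWalk G u (P.append (Q.append R)) :=
    Walk.monoWalk_of_dist_add_length_eq u <| by
      simp only [Walk.length_append]
      omega
  exact ⟨hmono.isPath, hmono⟩

/-- In a `uv`-straight graph `G`, for every monotone `xy`-path
`Q` with `h(x) ≤ h(y)`, there exist a monotone `ux`-path and a monotone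
`yv`-path of `G`, and for every monotone `ux`-path `P` and monotone `yv`-path
`R` of `G` the concatenation `P ∪ Q ∪ R` is a monotone `uv`-path of `G`. -/
theorem statement5 [Fintype V] [DecidableEq V] (G : SimpleGraph V) (u v : V)
    (hstraight : Straight G u v)
    (x y : V) (Q : G.Walk x y) (hQpath : Q.IsPath) (hQmono : MonoWalk G u Q)
    (hxy : G.dist u x ≤ G.dist u y) :
    (∃ P : G.Walk u x, P.IsPath ∧ MonoWalk G u P) ∧
    (∃ R : G.Walk y v, R.IsPath ∧ MonoWalk G u R) ∧
    (∀ (P : G.Walk u x) (R : G.Walk y v),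
      P.IsPath → MonoWalk G u P → R.IsPath → MonoWalk G u R →
      (P.append (Q.append R)).IsPath ∧ MonoWalk G u (P.append (Q.append R))) :=
  statement5_general G u v hstraight x y Q hQmono hxy
end

section
/- Let G be a uv-straight graph and let (W1,W2) be a pair of wings for a quadruple (a,b,c,d) of vertices of G. Then for every monotone uc-path S of G containing W1 as a subpath and every monotone bv-path T of G containing W2 as a subpath, S minus c is anticomplete to T in G and S is anticomplete to T minus b in G. -/
open SimpleGraph

variable {V : Type*}

/-!
Heights change by at most one along an edge, so along a monotone walk they change by exactly
one at every step, always in the same direction, and the heights of its vertices fill the interval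
between the heights of its ends. If `x ∈ S` and `y ∈ T` are equal or adjacent, then
`h(a*) + 1 = h(b) ≤ h(y) ≤ h(x) + 1 ≤ h(c) + 1 = h(d*)`; so `x` lies on the part of `S` above
`a*`, which is `W1`, and `y` on the part of `T` below `d*`, which is `W2`. The wings rule out
such pairs.
-/

namespace SimpleGraph

variable {G : SimpleGraph V} {u : V}

lemma dist_le_dist_add_length {p q : V} (W : G.Walk p q) :
    G.dist u q ≤ G.dist u p + W.length :=
  (W.reachable.dist_triangle_right u).trans (Nat.add_le_add_left (dist_le W) _)

lemma dist_le_dist_add_one_of_adj {x y : V} (h : G.Adj x y) : G.dist u y ≤ G.dist u x + 1 :=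
  dist_le_dist_add_length h.toWalk

end SimpleGraph

section MonoWalk

variable {G : SimpleGraph V} {u p m q : V}

lemma MonoWalk.reverse {W : G.Walk p q} (hW : MonoWalk G u W) : MonoWalk G u W.reverse := by
  unfold MonoWalk at *
  rwa [Walk.support_reverse, List.map_reverse, List.nodup_reverse]

lemma MonoWalk.of_append_left {P : G.Walk p m} {Q : G.Walk m q}
    (h : MonoWalk G u (P.append Q)) : MonoWalk G u P := by
  unfold MonoWalk at *
  rw [Walk.support_append, List.map_append] at h
  exact h.of_append_left

lemma MonoWalk.of_append_right {P : G.Walk p m} {Q : G.Walk m q}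
    (h : MonoWalk G u (P.append Q)) : MonoWalk G u Q := by
  have h' := h.reverse
  rw [Walk.reverse_append] at h'
  simpa using h'.of_append_left.reverse

lemma MonoWalk.dist_eq_add_length {W : G.Walk p q} (hW : MonoWalk G u W) :
    G.dist u q = G.dist u p + W.length ∨ G.dist u p = G.dist u q + W.length := by
  induction W with
  | nil => simp
  | @cons x y q hxy W ih =>
    unfold MonoWalk at hW
    rw [Walk.support_cons, List.map_cons, List.nodup_cons] at hW
    obtain ⟨hx, hW⟩ := hW
    have ih := ih hW
    have hxy₁ := dist_le_dist_add_one_of_adj (u := u) hxy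
    have hxy₂ := dist_le_dist_add_one_of_adj (u := u) hxy.symm
    have hxy₃ : G.dist u x ≠ G.dist u y := fun h =>
      hx (h ▸ List.mem_map_of_mem W.start_mem_support)
    rw [Walk.length_cons]
    cases W with
    | nil => simp only [Walk.length_nil] at ih ⊢; omega
    | @cons _ z _ hyz W =>
      have hxz : G.dist u x ≠ G.dist u z := fun h =>
        hx (h ▸ List.mem_map_of_mem (List.mem_cons_of_mem _ W.start_mem_support))
      have hyz₁ := dist_le_dist_add_one_of_adj (u := u) hyz
      have hyz₂ := dist_le_dist_add_one_of_adj (u := u) hyz.symm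
      have hzq₁ := dist_le_dist_add_length (u := u) W
      have hzq₂ := dist_le_dist_add_length (u := u) W.reverse
      rw [Walk.length_reverse] at hzq₂
      rw [Walk.length_cons] at ih ⊢
      omega

lemma MonoWalk.dist_between_ends {W : G.Walk p q} (hW : MonoWalk G u W) {z : V}
    (hz : z ∈ W.support) :
    min (G.dist u p) (G.dist u q) ≤ G.dist u z ∧ G.dist u z ≤ max (G.dist u p) (G.dist u q) := by
  obtain ⟨P, Q, rfl⟩ := W.mem_support_iff_exists_append.1 hz
  have hPQ := hW.dist_eq_add_length
  have hP₁ := dist_le_dist_add_length (u := u) P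
  have hP₂ := dist_le_dist_add_length (u := u) P.reverse
  have hQ₁ := dist_le_dist_add_length (u := u) Q
  have hQ₂ := dist_le_dist_add_length (u := u) Q.reverse
  simp only [Walk.length_append, Walk.length_reverse] at *
  omega

lemma MonoWalk.mem_right_of_dist_between {P : G.Walk p m} {Q : G.Walk m q}
    (h : MonoWalk G u (P.append Q)) {z : V} (hz : z ∈ (P.append Q).support)
    (hz₁ : min (G.dist u m) (G.dist u q) ≤ G.dist u z)
    (hz₂ : G.dist u z ≤ max (G.dist u m) (G.dist u q)) : z ∈ Q.support := by
  rcases (Walk.mem_support_append_iff P Q).1 hz with hzP | hzQ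
  · have hm : m ∈ (P.append Q).support :=
      (Walk.mem_support_append_iff P Q).2 (.inr Q.start_mem_support)
    have hzP₁ := h.of_append_left.dist_between_ends hzP
    have hP := h.of_append_left.dist_eq_add_length
    have hQ := h.of_append_right.dist_eq_add_length
    have hPQ := h.dist_eq_add_length
    rw [Walk.length_append] at hPQ
    have : z = m := List.inj_on_of_nodup_map h hz hm (by omega)
    exact this ▸ Q.start_mem_support
  · exact hzQ

lemma MonoWalk.mem_left_of_dist_between {P : G.Walk p m} {Q : G.Walk m q}
    (h : MonoWalk G u (P.append Q)) {z : V} (hz : z ∈ (P.append Q).support)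
    (hz₁ : min (G.dist u p) (G.dist u m) ≤ G.dist u z)
    (hz₂ : G.dist u z ≤ max (G.dist u p) (G.dist u m)) : z ∈ P.support := by
  have h' := h.reverse
  rw [Walk.reverse_append] at h'
  have hz' : z ∈ (Q.reverse.append P.reverse).support := by
    rwa [← Walk.reverse_append, Walk.support_reverse, List.mem_reverse]
  simpa using h'.mem_right_of_dist_between hz' (by omega) (by omega)

end MonoWalk

lemma Anticomplete.of_forall_eq_or_adj {G : SimpleGraph V} {X Y X' Y' : Set V}
    (h : Anticomplete G X' Y')
    (hXY : ∀ x ∈ X, ∀ y ∈ Y, (x = y ∨ G.Adj x y) → x ∈ X' ∧ y ∈ Y') :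
    Anticomplete G X Y := fun x hx y hy =>
  ⟨fun hxy => (h x (hXY x hx y hy (.inl hxy)).1 y (hXY x hx y hy (.inl hxy)).2).1 hxy,
   fun hxy => (h x (hXY x hx y hy (.inr hxy)).1 y (hXY x hx y hy (.inr hxy)).2).2 hxy⟩

theorem statement6_general (G : SimpleGraph V) (u v : V)
    (a b c d astar dstar : V)
    (W1 : G.Walk c astar) (W2 : G.Walk b dstar)
    (hwings : IsWingPair G u a b c d W1 W2)
    (S : G.Walk u c) (hSmono : MonoWalk G u S)
    (hSsub : ∃ S0 : G.Walk u astar, S = S0.append W1.reverse)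
    (T : G.Walk b v) (hTmono : MonoWalk G u T)
    (hTsub : ∃ T0 : G.Walk dstar v, T = W2.append T0) :
    Anticomplete G {x | x ∈ S.support ∧ x ≠ c} {x | x ∈ T.support} ∧
    Anticomplete G {x | x ∈ S.support} {x | x ∈ T.support ∧ x ≠ b} := by
  obtain ⟨-, -, -, -, -, -, hastar, hab, hbc, hcd, hdstar, anti₁, anti₂⟩ := hwings
  obtain ⟨S0, rfl⟩ := hSsub
  obtain ⟨T0, rfl⟩ := hTsub
  have hS : ∀ x ∈ (S0.append W1.reverse).support,
      G.dist u x ≤ G.dist u c ∧ (G.dist u astar ≤ G.dist u x → x ∈ W1.support) := by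
    intro x hx
    have hxc := (hSmono.dist_between_ends hx).2
    rw [dist_self, Nat.zero_max] at hxc
    refine ⟨hxc, fun hax => ?_⟩
    simpa using hSmono.mem_right_of_dist_between hx (by omega) (by omega)
  have hT : ∀ y ∈ (W2.append T0).support,
      G.dist u b ≤ G.dist u y ∧ (G.dist u y ≤ G.dist u dstar → y ∈ W2.support) := by
    have hdv := (hTmono.dist_between_ends ((Walk.mem_support_append_iff W2 T0).2
      (.inl W2.end_mem_support))).2
    intro y hy
    have hby := (hTmono.dist_between_ends hy).1
    refine ⟨by omega, fun hyd => hTmono.mem_left_of_dist_between hy (by omega) (by omega)⟩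
  have hclose : ∀ x ∈ (S0.append W1.reverse).support, ∀ y ∈ (W2.append T0).support,
      (x = y ∨ G.Adj x y) → x ∈ W1.support ∧ y ∈ W2.support := by
    intro x hx y hy hxy
    have hyx : G.dist u y ≤ G.dist u x + 1 := by
      rcases hxy with rfl | hxy
      · omega
      · exact dist_le_dist_add_one_of_adj hxy
    obtain ⟨hxc, hxW1⟩ := hS x hx
    obtain ⟨hby, hyW2⟩ := hT y hy
    exact ⟨hxW1 (by omega), hyW2 (by omega)⟩
  exact ⟨anti₁.of_forall_eq_or_adj fun x hx y hy hxy => ⟨⟨(hclose x hx.1 y hy hxy).1, hx.2⟩,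
      (hclose x hx.1 y hy hxy).2⟩,
    anti₂.of_forall_eq_or_adj fun x hx y hy hxy => ⟨(hclose x hx y hy.1 hxy).1,
      ⟨(hclose x hx y hy.1 hxy).2, hy.2⟩⟩⟩

/-- Let `(W1, W2)` be a pair of wings for a quadruple
`(a, b, c, d)` of a `uv`-straight graph `G`. Then for every monotone `uc`-path
`S` of `G` containing `W1` as a subpath and every monotone `bv`-path `T` of `G`
containing `W2` as a subpath, `S - c` is anticomplete to `T` in `G` and `S` is
anticomplete to `T - b` in `G`. -/
theorem statement6 [Fintype V] [DecidableEq V] (G : SimpleGraph V) (u v : V)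
    (hstraight : Straight G u v)
    (a b c d astar dstar : V)
    (W1 : G.Walk c astar) (W2 : G.Walk b dstar)
    (hwings : IsWingPair G u a b c d W1 W2)
    (S : G.Walk u c) (hSpath : S.IsPath) (hSmono : MonoWalk G u S)
    (hSsub : ∃ S0 : G.Walk u astar, S = S0.append W1.reverse)
    (T : G.Walk b v) (hTpath : T.IsPath) (hTmono : MonoWalk G u T)
    (hTsub : ∃ T0 : G.Walk dstar v, T = W2.append T0) :
    Anticomplete G {x | x ∈ S.support ∧ x ≠ c} {x | x ∈ T.support} ∧
    Anticomplete G {x | x ∈ S.support} {x | x ∈ T.support ∧ x ≠ b} :=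
  statement6_general G u v a b c d astar dstar W1 W2 hwings S hSmono hSsub T hTmono hTsub
end

section
/- Let P be a shortest uv-trail of a uv-straight graph G with twist pair (s,t). Let a be the vertex of P[u,s] with h(a) = h(t) and let e be the vertex of P[t,v] with h(e) = h(s). Let a* be the neighbor of a on P[u,a] and let e* be the neighbor of e on P[e,v]. Then P[a*,s] and P[t,e*] form a pair of wings for the quadruple (a,t,s,e) in G; in particular, (a,t,s,e) is winged in G. -/
open SimpleGraph

variable {V : Type*}

section AuxStatement8

variable {V : Type*} {G : SimpleGraph V}

private lemma supp_getElem8 {x y : V} (p : G.Walk x y) : ∀ (i : ℕ) (hi : i < p.support.length),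
    p.support[i] = p.getVert i := by
  induction p with
  | nil =>
    intro i hi
    simp only [Walk.support_nil, List.length_singleton] at hi
    have : i = 0 := by omega
    subst this; rfl
  | cons h q ih =>
    intro i hi
    cases i with
    | zero => simp [Walk.getVert]
    | succ k =>
      have hi' : k < q.support.length := by
        simpa [Walk.support_cons] using hi
      have h2 : (Walk.cons h q).support[k+1]'(by simpa [Walk.support_cons] using hi)
          = q.support[k]'hi' := by
        simp [Walk.support_cons]
      rw [h2, Walk.getVert_cons_succ]
      exact ih k hi'

private lemma getVert_inj8 {x y : V} {p : G.Walk x y} (hp : p.IsPath) {i j : ℕ}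
    (hi : i ≤ p.length) (hj : j ≤ p.length) (hij : p.getVert i = p.getVert j) : i = j := by
  have hnd := hp.support_nodup
  have hi' : i < p.support.length := by rw [Walk.length_support]; omega
  have hj' : j < p.support.length := by rw [Walk.length_support]; omega
  have : p.support[i] = p.support[j] := by
    rw [supp_getElem8 p i hi', supp_getElem8 p j hj', hij]
  exact (hnd.getElem_inj_iff (hi := hi') (hj := hj')).mp this

private lemma support_dropUntil_sublist8 [DecidableEq V] {x y : V} (p : G.Walk x y) (z : V)
    (hz : z ∈ p.support) : ((p.dropUntil z hz).support).Sublist p.support := by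
  have hcat := congrArg Walk.support (p.take_spec hz)
  rw [Walk.support_append] at hcat
  have h1 : (p.takeUntil z hz).support
      = (p.takeUntil z hz).support.dropLast ++ [z] := by
    conv_lhs => rw [← List.dropLast_append_getLast (p.takeUntil z hz).support_ne_nil]
    rw [Walk.getLast_support]
  have h2 : (p.dropUntil z hz).support = z :: (p.dropUntil z hz).support.tail :=
    Walk.support_eq_cons _
  rw [h1] at hcat
  rw [List.append_assoc] at hcat
  have h3 : [z] ++ (p.dropUntil z hz).support.tail = (p.dropUntil z hz).support := by
    rw [h2]; rfl
  rw [h3] at hcat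
  rw [← hcat]
  exact List.sublist_append_right _ _

private lemma support_takeUntil_sublist8 [DecidableEq V] {x y : V} (p : G.Walk x y) (z : V)
    (hz : z ∈ p.support) : ((p.takeUntil z hz).support).Sublist p.support := by
  have hcat := congrArg Walk.support (p.take_spec hz)
  rw [Walk.support_append] at hcat
  rw [← hcat]
  exact List.sublist_append_left _ _

private lemma mono_heights8 (f : V → ℕ) {x y : V} (W : G.Walk x y) (h0 : f x = 0)
    (hadj : ∀ a b : V, G.Adj a b → f b ≤ f a + 1)
    (hnd : (W.support.map f).Nodup) :
    ∀ i, i ≤ W.length → f (W.getVert i) = i := by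
  intro i
  induction i using Nat.strong_induction_on with
  | _ i ih =>
    intro hi
    match i with
    | 0 => rw [Walk.getVert_zero]; exact h0
    | (k+1) =>
      have hk : f (W.getVert k) = k := ih k (by omega) (by omega)
      have hadj' := W.adj_getVert_succ (show k < W.length by omega)
      have hle : f (W.getVert (k+1)) ≤ k + 1 := by
        have := hadj _ _ hadj'; omega
      by_contra hne
      set m := f (W.getVert (k+1)) with hm
      have hlt : m < k + 1 := lt_of_le_of_ne hle hne
      have hmval : f (W.getVert m) = m := ih m (by omega) (by omega)
      have hlen : W.support.length = W.length + 1 := Walk.length_support W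
      have hmlt : m < (W.support.map f).length := by
        rw [List.length_map, hlen]; omega
      have hklt : k + 1 < (W.support.map f).length := by
        rw [List.length_map, hlen]; omega
      have heq : (W.support.map f)[m]'hmlt = (W.support.map f)[k+1]'hklt := by
        rw [List.getElem_map, List.getElem_map,
          supp_getElem8 W m (by omega), supp_getElem8 W (k+1) (by omega), hmval, ← hm]
      have := (hnd.getElem_inj_iff (hi := hmlt) (hj := hklt)).mp heq
      omega

private lemma getVert_dropUntil8 [DecidableEq V] {x y : V} (p : G.Walk x y) {z : V}
    (hz : z ∈ p.support) (j : ℕ) :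
    (p.dropUntil z hz).getVert j = p.getVert ((p.takeUntil z hz).length + j) := by
  have hcat := congrArg (fun w : G.Walk x y => w.getVert ((p.takeUntil z hz).length + j))
    (p.take_spec hz)
  rw [← hcat, Walk.getVert_append, if_neg (by omega), Nat.add_sub_cancel_left]

private lemma getVert_takeUntil8 [DecidableEq V] {x y : V} (p : G.Walk x y) {z : V}
    (hz : z ∈ p.support) {i : ℕ} (hi : i ≤ (p.takeUntil z hz).length) :
    (p.takeUntil z hz).getVert i = p.getVert i := by
  rcases lt_or_eq_of_le hi with h | h
  · have hcat := congrArg (fun w : G.Walk x y => w.getVert i) (p.take_spec hz)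
    rw [← hcat, Walk.getVert_append, if_pos h]
  · subst h
    rw [Walk.getVert_length]
    have := getVert_dropUntil8 p hz 0
    rw [Walk.getVert_zero, Nat.add_zero] at this
    exact this

private lemma length_takeUntil_eq8 [DecidableEq V] {x y : V} {p : G.Walk x y} (hp : p.IsPath)
    {z : V} {i : ℕ} (hz : z ∈ p.support) (hi : i ≤ p.length) (hgv : p.getVert i = z) :
    (p.takeUntil z hz).length = i := by
  have h1 : p.getVert ((p.takeUntil z hz).length) = z := by
    have := getVert_dropUntil8 p hz 0
    rw [Walk.getVert_zero, Nat.add_zero] at this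
    exact this.symm
  exact getVert_inj8 hp (p.length_takeUntil_le hz) hi (by rw [h1, hgv])

variable {u v : V}

private lemma straight_reach8 (hstraight : Straight G u v) (x : V) : G.Reachable u x := by
  obtain ⟨Q, _, hxQ⟩ := hstraight x
  classical
  exact ⟨Q.takeUntil x hxQ⟩

private lemma straight_reach8' (hstraight : Straight G u v) (x : V) : G.Reachable x v := by
  obtain ⟨Q, _, hxQ⟩ := hstraight x
  classical
  exact ⟨Q.dropUntil x hxQ⟩

private lemma straight_sum8 (hstraight : Straight G u v) (x : V) :
    G.dist u x + G.dist x v = G.dist u v := by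
  classical
  obtain ⟨Q, ⟨hQp, hQl⟩, hxQ⟩ := hstraight x
  have h1 : G.dist u x ≤ (Q.takeUntil x hxQ).length := SimpleGraph.dist_le _
  have h2 : G.dist x v ≤ (Q.dropUntil x hxQ).length := SimpleGraph.dist_le _
  have h3 : (Q.takeUntil x hxQ).length + (Q.dropUntil x hxQ).length = G.dist u v := by
    rw [← hQl]
    have := congrArg Walk.length (Q.take_spec hxQ)
    rw [Walk.length_append] at this
    exact this
  have h4 : G.dist u v ≤ G.dist u x + G.dist x v := by
    obtain ⟨W1, hW1⟩ := (straight_reach8 hstraight x).exists_walk_length_eq_dist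
    obtain ⟨W2, hW2⟩ := (straight_reach8' hstraight x).exists_walk_length_eq_dist
    have := SimpleGraph.dist_le (W1.append W2)
    rwa [Walk.length_append, hW1, hW2] at this
  omega

private lemma straight_le8 (hstraight : Straight G u v) (x : V) :
    G.dist u x ≤ G.dist u v := by
  have := straight_sum8 hstraight x; omega

private lemma straight_top8 (hstraight : Straight G u v) {x : V}
    (hx : G.dist u x = G.dist u v) : x = v := by
  have h0 : G.dist x v = 0 := by have := straight_sum8 hstraight x; omega
  exact ((straight_reach8' hstraight x).dist_eq_zero_iff).mp h0

private lemma straight_adj_le8 (hstraight : Straight G u v) {a b : V} (hab : G.Adj a b) :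
    G.dist u b ≤ G.dist u a + 1 := by
  obtain ⟨W, hW⟩ := (straight_reach8 hstraight a).exists_walk_length_eq_dist
  have := SimpleGraph.dist_le (W.concat hab)
  rwa [Walk.length_concat, hW] at this

end AuxStatement8


/-- Let `P` be a shortest `uv`-trail of a `uv`-straight graph
`G` with twist pair `(s, t)`, let `a` be the vertex of `P[u,s]` with
`h(a) = h(t)` and `e` the vertex of `P[t,v]` with `h(e) = h(s)`, let `a*` be the
neighbor of `a` on `P[u,a]` and `e*` the neighbor of `e` on `P[e,v]`. Then
`P[a*,s]` and `P[t,e*]` form a pair of wings for `(a, t, s, e)` in `G`; in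
particular, `(a, t, s, e)` is winged in `G`. -/
theorem statement8 [Fintype V] [DecidableEq V] (G : SimpleGraph V) (u v : V)
    (hstraight : Straight G u v)
    (P : G.Walk u v) (hP : IsShortestTrail G u v P)
    (s t : V) (htwist : IsTwistPair G u v P s t)
    (hs : s ∈ P.support) (ht : t ∈ P.support)
    (a : V) (haP : a ∈ P.support)
    (ha : a ∈ (P.takeUntil s hs).support) (hha : G.dist u a = G.dist u t)
    (e : V) (heP : e ∈ P.support)
    (he : e ∈ (P.dropUntil t ht).support) (hhe : G.dist u e = G.dist u s)
    (astar estar : V)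
    (hastar : astar = (P.takeUntil a haP).getVert ((P.takeUntil a haP).length - 1))
    (hestar : estar = (P.dropUntil e heP).getVert 1) :
    (∃ (h1 : astar ∈ (P.takeUntil s hs).support)
       (h2 : estar ∈ (P.dropUntil t ht).support),
      IsWingPair G u a t s e (((P.takeUntil s hs).dropUntil astar h1).reverse)
        ((P.dropUntil t ht).takeUntil estar h2)) ∧
    Winged G u a t s e := by
  obtain ⟨⟨⟨hPpath, hPind⟩, hPns⟩, -⟩ := hP
  obtain ⟨hs2, ht2, hm1, hm2, -, -⟩ := htwist
  have hmonoPre : ((P.takeUntil s hs).support.map (fun z => G.dist u z)).Nodup := hm1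
  have hmonoSuf : ((P.dropUntil t ht).support.map (fun z => G.dist u z)).Nodup := hm2
  have hDle : ∀ x : V, G.dist u x ≤ G.dist u v := straight_le8 hstraight
  -- heights along the prefix
  have hPreV : ∀ i, i ≤ (P.takeUntil s hs).length →
      G.dist u ((P.takeUntil s hs).getVert i) = i := by
    refine mono_heights8 (fun z => G.dist u z) _ ?_ ?_ hmonoPre
    · exact SimpleGraph.dist_self
    · exact fun a b hab => straight_adj_le8 hstraight hab
  have hlp : (P.takeUntil s hs).length = G.dist u s := by
    have h := hPreV (P.takeUntil s hs).length le_rfl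
    rw [Walk.getVert_length] at h
    omega
  -- heights along the suffix, via the reversed walk
  have hmonoSufRev :
      ((P.dropUntil t ht).reverse.support.map
        (fun z => G.dist u v - G.dist u z)).Nodup := by
    rw [Walk.support_reverse, List.map_reverse, List.nodup_reverse]
    have hmap : (P.dropUntil t ht).support.map (fun z => G.dist u v - G.dist u z)
        = ((P.dropUntil t ht).support.map (fun z => G.dist u z)).map
            (fun m => G.dist u v - m) := by
      rw [List.map_map]; rfl
    rw [hmap]
    refine List.Nodup.map_on ?_ hmonoSuf
    intro m1 hm1' m2 hm2' hEq
    obtain ⟨z1, hz1, rfl⟩ := List.mem_map.mp hm1'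
    obtain ⟨z2, hz2, rfl⟩ := List.mem_map.mp hm2'
    have := hDle z1; have := hDle z2
    omega
  have hSufRevV : ∀ i, i ≤ (P.dropUntil t ht).reverse.length →
      G.dist u v - G.dist u ((P.dropUntil t ht).reverse.getVert i) = i := by
    refine mono_heights8 (fun z => G.dist u v - G.dist u z) _ ?_ ?_ hmonoSufRev
    · exact Nat.sub_self _
    · intro a b hab
      have h1 := straight_adj_le8 hstraight hab.symm
      have := hDle a; have := hDle b
      show G.dist u v - G.dist u b ≤ G.dist u v - G.dist u a + 1
      omega
  have hrevlen : (P.dropUntil t ht).reverse.length = (P.dropUntil t ht).length :=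
    Walk.length_reverse _
  have hDt : G.dist u t + (P.dropUntil t ht).length = G.dist u v := by
    have h := hSufRevV (P.dropUntil t ht).reverse.length le_rfl
    rw [Walk.getVert_length, hrevlen] at h
    have := hDle t
    omega
  have hSufV : ∀ j, j ≤ (P.dropUntil t ht).length →
      G.dist u ((P.dropUntil t ht).getVert j) = G.dist u t + j := by
    intro j hj
    have h := hSufRevV ((P.dropUntil t ht).length - j) (by rw [hrevlen]; omega)
    rw [Walk.getVert_reverse] at h
    have hidx : (P.dropUntil t ht).length - ((P.dropUntil t ht).length - j) = j := by
      omega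
    rw [hidx] at h
    have := hDle ((P.dropUntil t ht).getVert j)
    omega
  -- positions in P
  have hn_t : (P.takeUntil t ht).length + (P.dropUntil t ht).length = P.length := by
    have := congrArg Walk.length (P.take_spec ht)
    rw [Walk.length_append] at this
    exact this
  have hGVt : P.getVert (P.takeUntil t ht).length = t := by
    have := getVert_dropUntil8 P ht 0
    rw [Walk.getVert_zero, Nat.add_zero] at this
    exact this.symm
  have hGVs : P.getVert (P.takeUntil s hs).length = s := by
    have := getVert_dropUntil8 P hs 0
    rw [Walk.getVert_zero, Nat.add_zero] at this
    exact this.symm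
  have hlplen : (P.takeUntil s hs).length ≤ P.length := P.length_takeUntil_le hs
  have hitlen : (P.takeUntil t ht).length ≤ P.length := P.length_takeUntil_le ht
  have hPgetPre : ∀ i, i ≤ (P.takeUntil s hs).length →
      P.getVert i = (P.takeUntil s hs).getVert i :=
    fun i hi => (getVert_takeUntil8 P hs hi).symm
  have hPgetSuf : ∀ j, P.getVert ((P.takeUntil t ht).length + j)
      = (P.dropUntil t ht).getVert j :=
    fun j => (getVert_dropUntil8 P ht j).symm
  -- the position of a in the prefix
  obtain ⟨ia, hia1, hia2⟩ := Walk.mem_support_iff_exists_getVert.mp ha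
  have hiat : ia = G.dist u t := by
    have h := hPreV ia hia2
    rw [hia1] at h
    omega
  have hta : G.dist u t ≤ (P.takeUntil s hs).length := hiat ▸ hia2
  have hgva : (P.takeUntil s hs).getVert (G.dist u t) = a := by
    rw [← hiat]; exact hia1
  -- h(t) ≥ 1
  have hht1 : 1 ≤ G.dist u t := by
    by_contra hc
    have h0 : G.dist u t = 0 := by omega
    have htu : u = t := ((straight_reach8 hstraight t).dist_eq_zero_iff).mp h0
    have hit0 : (P.takeUntil t ht).length = 0 :=
      length_takeUntil_eq8 hPpath ht (by omega) (by rw [Walk.getVert_zero]; exact htu)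
    exact hPns ⟨hPpath, by omega⟩
  -- h(s) < h(v)
  have hsD : G.dist u s < G.dist u v := by
    rcases lt_or_eq_of_le (hDle s) with h | h
    · exact h
    · exfalso
      have hsv : s = v := straight_top8 hstraight h
      have hlen : (P.takeUntil s hs).length = P.length :=
        length_takeUntil_eq8 hPpath hs le_rfl (by rw [Walk.getVert_length]; exact hsv.symm)
      exact hPns ⟨hPpath, by omega⟩
  -- the position of e in the suffix
  obtain ⟨je, hje1, hje2⟩ := Walk.mem_support_iff_exists_getVert.mp he
  have hjes : G.dist u t + je = G.dist u s := by
    have h := hSufV je hje2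
    rw [hje1] at h
    omega
  have hjelt : je < (P.dropUntil t ht).length := by
    rcases lt_or_eq_of_le hje2 with h | h
    · exact h
    · exfalso
      have hev : e = v := by rw [← hje1, h, Walk.getVert_length]
      rw [hev] at hhe
      omega
  -- s comes strictly before t on P
  have hlpit : (P.takeUntil s hs).length < (P.takeUntil t ht).length := by
    by_contra hc
    push_neg at hc
    have h1 : (P.takeUntil s hs).getVert (P.takeUntil t ht).length = t := by
      rw [← hPgetPre _ hc]; exact hGVt
    have h2 := hPreV _ hc
    rw [h1] at h2
    exact hPns ⟨hPpath, by omega⟩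
  -- astar
  have hgva' : P.getVert (G.dist u t) = a := by
    rw [hPgetPre _ hta]; exact hgva
  have hidxa : (P.takeUntil a haP).length = G.dist u t :=
    length_takeUntil_eq8 hPpath haP (le_trans hta hlplen) hgva'
  have hastar' : astar = P.getVert (G.dist u t - 1) := by
    rw [hastar, hidxa]
    exact getVert_takeUntil8 P haP (by rw [hidxa]; omega)
  have hgvastar : (P.takeUntil s hs).getVert (G.dist u t - 1) = astar := by
    rw [← hPgetPre _ (by omega), hastar']
  have h1mem : astar ∈ (P.takeUntil s hs).support :=
    Walk.mem_support_iff_exists_getVert.mpr ⟨G.dist u t - 1, hgvastar, by omega⟩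
  have hhastar : G.dist u astar = G.dist u t - 1 := by
    rw [← hgvastar]; exact hPreV _ (by omega)
  -- estar
  have hgve' : P.getVert ((P.takeUntil t ht).length + je) = e := by
    rw [hPgetSuf]; exact hje1
  have hidxe : (P.takeUntil e heP).length = (P.takeUntil t ht).length + je :=
    length_takeUntil_eq8 hPpath heP (by omega) hgve'
  have hestar' : estar = P.getVert ((P.takeUntil t ht).length + je + 1) := by
    rw [hestar, getVert_dropUntil8 P heP 1, hidxe]
  have hgvestar : (P.dropUntil t ht).getVert (je + 1) = estar := by
    rw [hestar', ← hPgetSuf (je + 1), ← Nat.add_assoc]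
  have h2mem : estar ∈ (P.dropUntil t ht).support :=
    Walk.mem_support_iff_exists_getVert.mpr ⟨je + 1, hgvestar, by omega⟩
  have hhestar : G.dist u estar = G.dist u s + 1 := by
    rw [← hgvestar, hSufV (je + 1) (by omega)]
    omega
  -- the two wings
  have hPrepath : (P.takeUntil s hs).IsPath := hPpath.takeUntil hs
  have hSufpath : (P.dropUntil t ht).IsPath := hPpath.dropUntil ht
  have hidxastar : ((P.takeUntil s hs).takeUntil astar h1mem).length = G.dist u t - 1 :=
    length_takeUntil_eq8 hPrepath h1mem (by omega) hgvastar
  have hW1sum : ((P.takeUntil s hs).takeUntil astar h1mem).length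
      + ((P.takeUntil s hs).dropUntil astar h1mem).length = (P.takeUntil s hs).length := by
    have := congrArg Walk.length ((P.takeUntil s hs).take_spec h1mem)
    rw [Walk.length_append] at this
    exact this
  have hW1get : ∀ j, ((P.takeUntil s hs).dropUntil astar h1mem).getVert j
      = (P.takeUntil s hs).getVert (G.dist u t - 1 + j) := by
    intro j
    rw [getVert_dropUntil8 _ h1mem j, hidxastar]
  have hidxestar : ((P.dropUntil t ht).takeUntil estar h2mem).length = je + 1 :=
    length_takeUntil_eq8 hSufpath h2mem (by omega) hgvestar
  have hW2get : ∀ j, j ≤ je + 1 → ((P.dropUntil t ht).takeUntil estar h2mem).getVert j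
      = (P.dropUntil t ht).getVert j := by
    intro j hj
    exact getVert_takeUntil8 _ h2mem (by rw [hidxestar]; omega)
  have haW1 : a ∈ ((P.takeUntil s hs).dropUntil astar h1mem).support := by
    refine Walk.mem_support_iff_exists_getVert.mpr ⟨1, ?_, by omega⟩
    rw [hW1get 1]
    have hone : G.dist u t - 1 + 1 = G.dist u t := by omega
    rw [hone]
    exact hgva
  have heW2 : e ∈ ((P.dropUntil t ht).takeUntil estar h2mem).support := by
    refine Walk.mem_support_iff_exists_getVert.mpr ⟨je, ?_, by rw [hidxestar]; omega⟩
    rw [hW2get je (by omega)]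
    exact hje1
  have hMonoW1 : MonoWalk G u (((P.takeUntil s hs).dropUntil astar h1mem).reverse) := by
    show ((((P.takeUntil s hs).dropUntil astar h1mem).reverse).support.map
      (fun z => G.dist u z)).Nodup
    rw [Walk.support_reverse, List.map_reverse, List.nodup_reverse]
    exact hmonoPre.sublist
      (List.Sublist.map _ (support_dropUntil_sublist8 _ astar h1mem))
  have hMonoW2 : MonoWalk G u ((P.dropUntil t ht).takeUntil estar h2mem) := by
    show ((((P.dropUntil t ht).takeUntil estar h2mem)).support.map
      (fun z => G.dist u z)).Nodup
    exact hmonoSuf.sublist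
      (List.Sublist.map _ (support_takeUntil_sublist8 _ estar h2mem))
  have hW1path : (((P.takeUntil s hs).dropUntil astar h1mem).reverse).IsPath :=
    (hPrepath.dropUntil h1mem).reverse
  have hW2path : ((P.dropUntil t ht).takeUntil estar h2mem).IsPath :=
    hSufpath.takeUntil h2mem
  -- anticompleteness
  have hmemW1 : ∀ x ∈ (((P.takeUntil s hs).dropUntil astar h1mem).reverse).support,
      ∃ k, G.dist u t - 1 ≤ k ∧ k ≤ (P.takeUntil s hs).length ∧ P.getVert k = x := by
    intro x hx
    rw [Walk.support_reverse, List.mem_reverse] at hx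
    obtain ⟨j, hj1, hj2⟩ := Walk.mem_support_iff_exists_getVert.mp hx
    refine ⟨G.dist u t - 1 + j, by omega, by omega, ?_⟩
    rw [hPgetPre _ (by omega), ← hW1get j]
    exact hj1
  have hmemW2 : ∀ y ∈ ((P.dropUntil t ht).takeUntil estar h2mem).support,
      ∃ j, j ≤ je + 1 ∧ P.getVert ((P.takeUntil t ht).length + j) = y := by
    intro y hy
    obtain ⟨j, hj1, hj2⟩ := Walk.mem_support_iff_exists_getVert.mp hy
    rw [hidxestar] at hj2
    refine ⟨j, hj2, ?_⟩
    rw [hPgetSuf j, ← hW2get j hj2]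
    exact hj1
  have hkey : ∀ x ∈ (((P.takeUntil s hs).dropUntil astar h1mem).reverse).support,
      ∀ y ∈ ((P.dropUntil t ht).takeUntil estar h2mem).support,
      x ≠ y ∧ (G.Adj x y → x = s ∧ y = t) := by
    intro x hx y hy
    obtain ⟨k, hk1, hk2, hk3⟩ := hmemW1 x hx
    obtain ⟨j, hj1, hj2⟩ := hmemW2 y hy
    have hkn : k ≤ P.length := le_trans hk2 hlplen
    have hk'n : (P.takeUntil t ht).length + j ≤ P.length := by omega
    have hxy : x ≠ y := by
      intro hEq
      have := getVert_inj8 hPpath hkn hk'n (by rw [hk3, hj2, hEq])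
      omega
    refine ⟨hxy, ?_⟩
    intro hadj
    have hxP : x ∈ P.support := Walk.mem_support_iff_exists_getVert.mpr ⟨k, hk3, hkn⟩
    have hyP : y ∈ P.support := Walk.mem_support_iff_exists_getVert.mpr ⟨_, hj2, hk'n⟩
    have hsub := hPind x y hxP hyP hadj
    rw [Walk.toSubgraph_adj_iff] at hsub
    obtain ⟨i0, hi0eq, hi0lt⟩ := hsub
    rw [Sym2.eq_iff] at hi0eq
    rcases hi0eq with ⟨hx1, hy1⟩ | ⟨hy1, hx1⟩
    · have e1 : i0 = k := getVert_inj8 hPpath (by omega) hkn (hx1.trans hk3.symm)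
      have e2 : i0 + 1 = (P.takeUntil t ht).length + j :=
        getVert_inj8 hPpath (by omega) hk'n (hy1.trans hj2.symm)
      have hj0 : j = 0 := by omega
      have hkl : k = (P.takeUntil s hs).length := by omega
      constructor
      · rw [← hk3, hkl]; exact hGVs
      · rw [← hj2, hj0, Nat.add_zero]; exact hGVt
    · have e1 : i0 = (P.takeUntil t ht).length + j :=
        getVert_inj8 hPpath (by omega) hk'n (hy1.trans hj2.symm)
      have e2 : i0 + 1 = k := getVert_inj8 hPpath (by omega) hkn (hx1.trans hk3.symm)
      omega
  have hwing : IsWingPair G u a t s e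
      (((P.takeUntil s hs).dropUntil astar h1mem).reverse)
      ((P.dropUntil t ht).takeUntil estar h2mem) := by
    refine ⟨hW1path, hW2path, hMonoW1, hMonoW2, ?_, heW2, ?_, hha, ?_, hhe.symm, ?_, ?_, ?_⟩
    · rw [Walk.support_reverse, List.mem_reverse]; exact haW1
    · omega
    · omega
    · omega
    · intro x hx y hy
      obtain ⟨hx1, hx2⟩ := hx
      have h := hkey x hx1 y hy
      exact ⟨h.1, fun hadj => hx2 (h.2 hadj).1⟩
    · intro x hx y hy
      obtain ⟨hy1, hy2⟩ := hy
      have h := hkey x hx y hy1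
      exact ⟨h.1, fun hadj => hy2 (h.2 hadj).2⟩
  exact ⟨⟨h1mem, h2mem, hwing⟩, astar, estar, _, _, hwing⟩
end
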